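/- Let n ≥ 1 be a natural number, p₀ ∈ (1, ∞), and s₀ ∈ ℝ with s₀ ≥ 1 + n/p₀. Then there exist t ∈ ℝ and r ∈ (1, ∞) such that (t, r) ∈ 𝔻(𝓐) ∩ 𝔻(L) (i.e. t > 1/r and t + s₀ > 1 + max(0, n/p₀ + n/r − n)) but (t, r) ∉ 𝔻(N) (i.e. it is not the case that both t > 1/2 + max(0, n/r − n/2) and t > n/r − 1 hold). Hence for sufficiently regular a priori data the parametrix method applies to target spaces outside the domain 𝔻(N) accessible to boot-strap arguments. -/

import Mathlib

lemma max_zero_add_div_sub_le {a b r : ℝ} (ha : 0 ≤ a) (hb : 0 ≤ b) (hr : 1 ≤ r) :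
    max 0 (a + b / r - b) ≤ a :=
  max_le ha (by linarith [div_le_self hb hr])

theorem beyond_bootstrap_general
    (n : ℕ) (p₀ s₀ : ℝ) (hp₀ : 1 < p₀)
    (hs₀ : s₀ ≥ 1 + (n : ℝ) / p₀) :
    ∃ t r : ℝ, 1 < r ∧ t > 1 / r ∧
      t + s₀ > 1 + max 0 ((n : ℝ) / p₀ + n / r - n) ∧
      ¬ (t > 1 / 2 + max 0 ((n : ℝ) / r - n / 2) ∧ t > (n : ℝ) / r - 1) := by
  have hnp₀ : 0 ≤ (n : ℝ) / p₀ := div_nonneg n.cast_nonneg (by linarith)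
  -- `t = 1/2` violates the first condition of `𝔻(N)` for every `r`, and `r > 2` keeps `t > 1/r`.
  refine ⟨1 / 2, 4, by norm_num, by norm_num, ?_, fun ⟨hN, _⟩ => ?_⟩
  · linarith [max_zero_add_div_sub_le hnp₀ n.cast_nonneg (by norm_num : (1 : ℝ) ≤ 4)]
  · linarith [le_max_left 0 ((n : ℝ) / 4 - n / 2)]

/-- For sufficiently regular a priori data (`s₀ ≥ 1 + n/p₀`) there are target
parameters `(t, r)` in `𝔻(𝓐) ∩ 𝔻(L)` but outside `𝔻(N)`. -/
theorem beyond_bootstrap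
    (n : ℕ) (hn : 1 ≤ n) (p₀ s₀ : ℝ) (hp₀ : 1 < p₀)
    (hs₀ : s₀ ≥ 1 + (n : ℝ) / p₀) :
    ∃ t r : ℝ, 1 < r ∧ t > 1 / r ∧
      t + s₀ > 1 + max 0 ((n : ℝ) / p₀ + n / r - n) ∧
      ¬ (t > 1 / 2 + max 0 ((n : ℝ) / r - n / 2) ∧ t > (n : ℝ) / r - 1) :=
  beyond_bootstrap_general n p₀ s₀ hp₀ hs₀
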